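/- For every finite simple graph G, either c₂(G) = mr(G, F₂), or c₂(G) = mr(G, F₂) + 1 and mr(G, F₂) is even. -/

import Mathlib

open Matrix

/-- A subgraph complementation system for `G`: a finite collection (multiset) of subsets of
vertices such that two distinct vertices are adjacent iff they lie together in an odd
number of the sets. -/
def IsSCS {V : Type*} [DecidableEq V] (G : SimpleGraph V) (𝒞 : Multiset (Finset V)) : Prop :=
  ∀ u v : V, u ≠ v →
    (G.Adj u v ↔ Odd (Multiset.card (𝒞.filter (fun C => u ∈ C ∧ v ∈ C))))

/-- The subgraph complementation number `c₂(G)`: the minimum cardinality of a subgraph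
complementation system for `G`. -/
noncomputable def c2 {V : Type*} [DecidableEq V] (G : SimpleGraph V) : ℕ :=
  sInf {k | ∃ 𝒞 : Multiset (Finset V), IsSCS G 𝒞 ∧ Multiset.card 𝒞 = k}

/-- A symmetric matrix over `F₂` fits `G` if its off-diagonal entries record adjacency. -/
def FitsF2 {V : Type*} (G : SimpleGraph V) (A : Matrix V V (ZMod 2)) : Prop :=
  A.IsSymm ∧ ∀ u v : V, u ≠ v → (A u v = 1 ↔ G.Adj u v)

/-- The minimum rank of `G` over `F₂`: the minimum rank of a symmetric matrix over `F₂`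
that fits `G`. -/
noncomputable def mrF2 {V : Type*} [Fintype V] (G : SimpleGraph V) : ℕ :=
  sInf {k | ∃ A : Matrix V V (ZMod 2), FitsF2 G A ∧ A.rank = k}

/-!
A multiset of vertex sets is a subgraph complementation system for `G` exactly when the sum of
the rank-one matrices `1_C 1_Cᵀ` over `F₂` fits `G`; hence `c₂(G)` is the least number of terms
`x xᵀ` summing to a matrix fitting `G`, and `mr(G, F₂) ≤ c₂(G)`.

Conversely let `A` fit `G` with minimum rank. If `A` has a nonzero diagonal, choose `y` with
`yᵀ A y = 1` (over `F₂` this is `y ⬝ᵥ A.diag = 1`) and, when `rank A ≥ 2`, `A y ≠ A.diag`: then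
`A + (A y)(A y)ᵀ` has rank one less by Wedderburn's formula and is zero or still has a nonzero
diagonal, so induction writes `A` as a sum of `rank A` squares. If `A` is alternating, its rank
is even (a Schur complement of a `2 × 2` pivot block `!![0, 1; 1, 0]` is alternating of rank two
less), and adding one square `(A e_v)(A e_v)ᵀ` with `A u v = 1` yields a nonzero diagonal without
raising the rank, so `c₂(G) ≤ mr(G, F₂) + 1`.
-/

namespace Matrix

variable {K l m n k : Type*} [Field K] [Fintype n]

theorem rank_add_le (A B : Matrix m n K) : (A + B).rank ≤ A.rank + B.rank := by
  rw [rank, rank, rank, mulVecLin_add]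
  exact (Submodule.finrank_mono (LinearMap.range_add_le _ _)).trans
    (Submodule.finrank_add_le_finrank_add_finrank _ _)

theorem range_mulVecLin_mul_le [Fintype k] (A : Matrix m n K) (B : Matrix n k K) :
    LinearMap.range (A * B).mulVecLin ≤ LinearMap.range A.mulVecLin := by
  rw [mulVecLin_mul]
  exact LinearMap.range_comp_le_range _ _

theorem mul_one_submatrix_eq_submatrix [DecidableEq n] (M : Matrix m n K) (f : k → n) :
    M * (1 : Matrix n n K).submatrix id f = M.submatrix id f := by
  ext; simp [mul_apply, one_apply]

theorem one_submatrix_mul_eq_submatrix [DecidableEq n] (f : k → n) (M : Matrix n m K) :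
    (1 : Matrix n n K).submatrix f id * M = M.submatrix f id := by
  ext; simp [mul_apply, one_apply]

theorem eq_zero_of_rank_eq_zero {A : Matrix m n K} (h : A.rank = 0) : A = 0 := by
  classical
  rw [rank, Submodule.finrank_eq_zero, LinearMap.range_eq_bot] at h
  ext i j
  simpa [mulVec_single] using congrFun (LinearMap.congr_fun h (Pi.single j 1)) i

theorem rank_le_rank_of_ker_le {A : Matrix m n K} {M : Matrix l n K}
    (h : LinearMap.ker M.mulVecLin ≤ LinearMap.ker A.mulVecLin) : A.rank ≤ M.rank := by
  have hA := A.mulVecLin.finrank_range_add_finrank_ker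
  have hM := M.mulVecLin.finrank_range_add_finrank_ker
  have := Submodule.finrank_mono h
  rw [rank, rank]
  omega

/-- Wedderburn's rank-reduction formula. -/
theorem rank_sub_mul_inv_mul_add_card [Fintype k] [DecidableEq k] (A : Matrix n n K)
    (P : Matrix n k K) (Q : Matrix k n K) (h : IsUnit (Q * A * P)) :
    (A - A * P * (Q * A * P)⁻¹ * Q * A).rank + Fintype.card k = A.rank := by
  classical
  set W := (Q * A * P)⁻¹
  set C := A * P * W * Q * A
  have hdet := (isUnit_iff_isUnit_det _).mp h
  have hQC : Q * C = Q * A := by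
    calc Q * C = Q * A * P * W * (Q * A) := by simp only [C, Matrix.mul_assoc]
      _ = Q * A := by rw [mul_nonsing_inv _ hdet, Matrix.one_mul]
  have hQB : Q * (A - C) = 0 := by rw [Matrix.mul_sub, hQC, sub_self]
  have hCfac : C = A * P * W * (Q * A) := by simp only [C, Matrix.mul_assoc]
  have hC : C.rank = Fintype.card k := by
    refine le_antisymm ?_ ?_
    · calc C.rank = (A * P * (W * Q * A)).rank := by rw [hCfac]; simp only [Matrix.mul_assoc]
        _ ≤ (A * P).rank := rank_mul_le_left _ _
        _ ≤ Fintype.card k := rank_le_card_width _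
    · calc Fintype.card k = (Q * C * P).rank := by rw [hQC]; exact (rank_of_isUnit _ h).symm
        _ ≤ C.rank := (rank_mul_le_left _ _).trans (rank_mul_le_right _ _)
  have hdisj : Disjoint (LinearMap.range (A - C).mulVecLin) (LinearMap.range C.mulVecLin) := by
    rw [Submodule.disjoint_def]
    rintro _ ⟨x, rfl⟩ ⟨y, hy⟩
    simp only [mulVecLin_apply] at hy ⊢
    have hQAy : (Q * A) *ᵥ y = 0 := by
      rw [← hQC, ← mulVec_mulVec, hy, mulVec_mulVec, hQB, zero_mulVec]
    rw [← hy, hCfac, ← mulVec_mulVec, hQAy, mulVec_zero]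
  have hsup : LinearMap.range A.mulVecLin =
      LinearMap.range (A - C).mulVecLin ⊔ LinearMap.range C.mulVecLin := by
    refine le_antisymm ?_ (sup_le ?_ ?_)
    · simpa [← mulVecLin_add] using LinearMap.range_add_le (A - C).mulVecLin C.mulVecLin
    · rw [show A - C = A * (1 - P * W * Q * A) by simp [C, Matrix.mul_sub, Matrix.mul_assoc]]
      exact range_mulVecLin_mul_le _ _
    · rw [show C = A * (P * W * Q * A) by simp [C, Matrix.mul_assoc]]
      exact range_mulVecLin_mul_le _ _
  rw [← hC, rank, rank, rank, hsup, ← Submodule.finrank_sup_add_finrank_inf_eq, hdisj.eq_bot,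
    finrank_bot, add_zero]

theorem exists_dotProduct_eq_one {d : n → K} (hd : d ≠ 0) : ∃ y, y ⬝ᵥ d = 1 := by
  classical
  obtain ⟨i, hi⟩ := Function.ne_iff.mp hd
  exact ⟨Pi.single i (d i)⁻¹, by simp [single_dotProduct, inv_mul_cancel₀ hi]⟩

theorem exists_dotProduct_eq_one_mulVec_ne {A : Matrix n n K} {d : n → K} (hd : d ≠ 0)
    (hA : 2 ≤ A.rank) : ∃ y, y ⬝ᵥ d = 1 ∧ A *ᵥ y ≠ d := by
  obtain ⟨y, hy⟩ := exists_dotProduct_eq_one hd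
  by_cases hAy : A *ᵥ y = d
  · obtain ⟨t, ht, hAt⟩ : ∃ t, t ⬝ᵥ d = 0 ∧ A *ᵥ t ≠ 0 := by
      by_contra! hker
      have hle : A.rank ≤ (replicateRow Unit d).rank := rank_le_rank_of_ker_le fun t ht => by
        simp only [LinearMap.mem_ker, mulVecLin_apply] at ht ⊢
        exact hker t (by simpa [replicateRow_mulVec_eq_const, dotProduct_comm] using congrFun ht ())
      have := (replicateRow Unit d).rank_le_card_height
      simp only [Fintype.card_unit] at this
      omega
    refine ⟨y + t, by rw [add_dotProduct, hy, ht, add_zero], ?_⟩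
    rwa [mulVec_add, hAy, ne_eq, add_eq_left]
  · exact ⟨y, hy, hAy⟩

section ZModTwo

variable {V : Type*}

theorem diag_add_vecMulVec_self (A : Matrix V V (ZMod 2)) (z : V → ZMod 2) :
    (A + vecMulVec z z).diag = A.diag + z := by
  ext i
  have : z i * z i = z i := by generalize z i = c; fin_cases c <;> rfl
  simp [vecMulVec_apply, this]

variable [Fintype V]

theorem dotProduct_mulVec_self_eq_dotProduct_diag [DecidableEq V] {A : Matrix V V (ZMod 2)}
    (hA : A.IsSymm) (y : V → ZMod 2) : y ⬝ᵥ (A *ᵥ y) = y ⬝ᵥ A.diag := by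
  let q : (V → ZMod 2) →+ ZMod 2 := AddMonoidHom.mk' (fun y => y ⬝ᵥ (A *ᵥ y)) fun x y => by
    have hxy : y ⬝ᵥ (A *ᵥ x) = x ⬝ᵥ (A *ᵥ y) := by
      rw [dotProduct_mulVec, ← mulVec_transpose, hA.eq, dotProduct_comm]
    simp only [mulVec_add, dotProduct_add, add_dotProduct, hxy]
    exact ZModModule.add_add_add_cancel _ _ _
  let l : (V → ZMod 2) →+ ZMod 2 := AddMonoidHom.mk' (· ⬝ᵥ A.diag) fun x y => add_dotProduct x y _
  have hql : q = l := AddMonoidHom.functions_ext _ q l fun i c => by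
    have hc : c * c = c := by fin_cases c <;> rfl
    simp [q, l, mulVec_single, single_dotProduct, mul_comm c, mul_assoc, hc]
  exact DFunLike.congr_fun hql y

theorem rank_add_vecMulVec_mulVec_add_one {A : Matrix V V (ZMod 2)} (hA : A.IsSymm)
    {y : V → ZMod 2} (hy : y ⬝ᵥ (A *ᵥ y) = 1) :
    (A + vecMulVec (A *ᵥ y) (A *ᵥ y)).rank + 1 = A.rank := by
  have hQAP : replicateRow Unit y * A * replicateCol Unit y = 1 := by
    rw [Matrix.mul_assoc, ← replicateCol_mulVec, replicateRow_mul_replicateCol, hy]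
    rfl
  have hcorr : A * replicateCol Unit y * replicateRow Unit y * A =
      vecMulVec (A *ᵥ y) (A *ᵥ y) := by
    rw [Matrix.mul_assoc, ← replicateRow_vecMul, ← replicateCol_mulVec, ← vecMulVec_eq,
      ← mulVec_transpose, hA.eq]
  have := rank_sub_mul_inv_mul_add_card A (replicateCol Unit y) (replicateRow Unit y)
    (hQAP ▸ isUnit_one)
  rwa [hQAP, inv_one, Matrix.mul_one, hcorr, ZModModule.sub_eq_add, Fintype.card_unit] at this

/-- `B` is the Schur complement of the pivot block `!![0, 1; 1, 0]` of `A` at rows and columns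
`u, v` with `A u v = 1`. -/
theorem exists_isSymm_diag_eq_zero_rank_add_two [DecidableEq V] {A : Matrix V V (ZMod 2)}
    (hA : A.IsSymm) (hd : A.diag = 0) (h0 : A ≠ 0) :
    ∃ B : Matrix V V (ZMod 2), B.IsSymm ∧ B.diag = 0 ∧ B.rank + 2 = A.rank := by
  obtain ⟨u, v, huv⟩ : ∃ u v, A u v ≠ 0 := by
    by_contra! h
    exact h0 (Matrix.ext h)
  replace huv : A u v = 1 := (by decide : ∀ c : ZMod 2, c ≠ 0 → c = 1) _ huv
  have hdiag : ∀ i, A i i = 0 := fun i => congrFun hd i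
  obtain ⟨f, hf0, hf1⟩ : ∃ f : Fin 2 → V, f 0 = u ∧ f 1 = v := ⟨![u, v], rfl, rfl⟩
  let J : Matrix (Fin 2) (Fin 2) (ZMod 2) := !![0, 1; 1, 0]
  let P := (1 : Matrix V V (ZMod 2)).submatrix id f
  let Q := (1 : Matrix V V (ZMod 2)).submatrix f id
  have hQAP : Q * A * P = J := by
    rw [one_submatrix_mul_eq_submatrix, mul_one_submatrix_eq_submatrix]
    ext a b
    fin_cases a <;> fin_cases b <;> simp [J, hf0, hf1, hdiag, huv, hA.apply u v]
  have hJ : J⁻¹ = J := inv_eq_left_inv (by decide)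
  have key := rank_sub_mul_inv_mul_add_card A _ _ (hQAP ▸ (isUnit_iff_isUnit_det J).mpr (by decide))
  rw [hQAP, hJ, Fintype.card_fin] at key
  have hB : ∀ i j, (A - A * P * J * Q * A) i j = A i j + A i u * A v j + A i v * A u j := by
    intro i j
    rw [Matrix.mul_assoc _ Q A, one_submatrix_mul_eq_submatrix, mul_one_submatrix_eq_submatrix,
      ZModModule.sub_eq_add]
    simp [mul_apply, Fin.sum_univ_two, J, hf0, hf1]
    ring
  refine ⟨_, ?_, ?_, key⟩
  · ext i j
    rw [transpose_apply, hB, hB, hA.apply i j, hA.apply u j, hA.apply v j, hA.apply i u,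
      hA.apply i v]
    ring
  · ext i
    rw [diag_apply, hB, hdiag, hA.apply i u, hA.apply i v, mul_comm, zero_add, ZModModule.add_self]
    rfl

theorem even_rank_of_diag_eq_zero [DecidableEq V] {A : Matrix V V (ZMod 2)} (hA : A.IsSymm)
    (hd : A.diag = 0) : Even A.rank := by
  induction hr : A.rank using Nat.strong_induction_on generalizing A with
  | _ r ih =>
    by_cases h0 : A = 0
    · rw [← hr, h0, rank_zero]
      exact ⟨0, rfl⟩
    obtain ⟨B, hBs, hBd, hBr⟩ := exists_isSymm_diag_eq_zero_rank_add_two hA hd h0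
    rw [← hr, ← hBr]
    exact (ih B.rank (by omega) hBs hBd rfl).add even_two

end ZModTwo

section SumVecMulVecSelf

variable {V R : Type*}

theorem isSymm_vecMulVec_self [CommMagma R] (x : V → R) : (vecMulVec x x).IsSymm :=
  transpose_vecMulVec x x

def sumVecMulVecSelf [Mul R] [AddCommMonoid R] (L : Multiset (V → R)) : Matrix V V R :=
  (L.map fun x => vecMulVec x x).sum

@[simp]
theorem sumVecMulVecSelf_zero [Mul R] [AddCommMonoid R] :
    sumVecMulVecSelf (0 : Multiset (V → R)) = 0 := by
  simp [sumVecMulVecSelf]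

@[simp]
theorem sumVecMulVecSelf_cons [Mul R] [AddCommMonoid R] (x : V → R) (L : Multiset (V → R)) :
    sumVecMulVecSelf (x ::ₘ L) = vecMulVec x x + sumVecMulVecSelf L := by
  simp [sumVecMulVecSelf]

theorem isSymm_sumVecMulVecSelf [CommMagma R] [AddCommMonoid R] (L : Multiset (V → R)) :
    (sumVecMulVecSelf L).IsSymm := by
  induction L using Multiset.induction_on with
  | empty => simp [IsSymm]
  | cons x L ih => simpa using (isSymm_vecMulVec_self x).add ih

theorem rank_sumVecMulVecSelf_le [Fintype V] [Field R] (L : Multiset (V → R)) :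
    (sumVecMulVecSelf L).rank ≤ Multiset.card L := by
  induction L using Multiset.induction_on with
  | empty => simp
  | cons x L ih =>
    rw [sumVecMulVecSelf_cons, Multiset.card_cons]
    have := rank_vecMulVec_le x x
    have := rank_add_le (vecMulVec x x) (sumVecMulVecSelf L)
    omega

theorem natCast_card_filter_eq_sumVecMulVecSelf_apply (L : Multiset (V → ZMod 2)) (u v : V) :
    ((L.filter fun x => x u = 1 ∧ x v = 1).card : ZMod 2) = sumVecMulVecSelf L u v := by
  induction L using Multiset.induction_on with
  | empty => simp
  | cons x L ih =>
    rw [Multiset.filter_cons, Multiset.card_add, Nat.cast_add, ih, sumVecMulVecSelf_cons, add_apply,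
      vecMulVec_apply]
    congr 1
    generalize x u = a; generalize x v = b
    fin_cases a <;> fin_cases b <;> rfl

variable [Fintype V] [DecidableEq V]

theorem exists_sumVecMulVecSelf_eq_card_le_rank {A : Matrix V V (ZMod 2)} (hA : A.IsSymm)
    (hd : A.diag = 0 → A = 0) :
    ∃ L : Multiset (V → ZMod 2), sumVecMulVecSelf L = A ∧ Multiset.card L ≤ A.rank := by
  induction hr : A.rank generalizing A with
  | zero => exact ⟨0, by simp [eq_zero_of_rank_eq_zero hr], le_rfl⟩
  | succ r ih =>
    by_cases hd0 : A.diag = 0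
    · exact ⟨0, by simp [hd hd0], by simp⟩
    obtain ⟨y, hy, hAy⟩ : ∃ y, y ⬝ᵥ A.diag = 1 ∧ (A *ᵥ y = A.diag → A.rank ≤ 1) := by
      by_cases h2 : 2 ≤ A.rank
      · obtain ⟨y, hy, hne⟩ := exists_dotProduct_eq_one_mulVec_ne hd0 h2
        exact ⟨y, hy, fun h => absurd h hne⟩
      · obtain ⟨y, hy⟩ := exists_dotProduct_eq_one hd0
        exact ⟨y, hy, fun _ => by omega⟩
    set z := A *ᵥ y
    have hB : (A + vecMulVec z z).rank + 1 = A.rank := rank_add_vecMulVec_mulVec_add_one hA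
      (by rw [dotProduct_mulVec_self_eq_dotProduct_diag hA, hy])
    have hdB : (A + vecMulVec z z).diag = 0 → A + vecMulVec z z = 0 := fun hdB => by
      rw [diag_add_vecMulVec_self, ← ZModModule.sub_eq_add, sub_eq_zero] at hdB
      exact eq_zero_of_rank_eq_zero (by have := hAy hdB.symm; omega)
    obtain ⟨L, hL, hcard⟩ := ih (hA.add (isSymm_vecMulVec_self z)) hdB (by omega)
    refine ⟨z ::ₘ L, ?_, by simp; omega⟩
    rw [sumVecMulVecSelf_cons, hL, add_left_comm, ZModModule.add_self, add_zero]

theorem exists_sumVecMulVecSelf_eq_card_le_rank_add_one {A : Matrix V V (ZMod 2)}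
    (hA : A.IsSymm) :
    ∃ L : Multiset (V → ZMod 2), sumVecMulVecSelf L = A ∧ Multiset.card L ≤ A.rank + 1 := by
  by_cases hd : A.diag = 0 → A = 0
  · obtain ⟨L, hL, hcard⟩ := exists_sumVecMulVecSelf_eq_card_le_rank hA hd
    exact ⟨L, hL, by omega⟩
  rw [Classical.not_imp] at hd
  obtain ⟨u, v, huv⟩ : ∃ u v, A u v ≠ 0 := by
    by_contra! h
    exact hd.2 (Matrix.ext h)
  set z := A *ᵥ Pi.single v 1
  have hdB : (A + vecMulVec z z).diag ≠ 0 := by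
    rw [diag_add_vecMulVec_self, hd.1, zero_add]
    intro hz
    exact huv (by simpa [z, mulVec_single] using congrFun hz u)
  have hrank : (A + vecMulVec z z).rank ≤ A.rank := by
    rw [show A + vecMulVec z z = A * (1 + vecMulVec (Pi.single v 1) z) by
      rw [Matrix.mul_add, Matrix.mul_one, mul_vecMulVec]]
    exact rank_mul_le_left _ _
  obtain ⟨L, hL, hcard⟩ := exists_sumVecMulVecSelf_eq_card_le_rank
    (hA.add (isSymm_vecMulVec_self z)) (fun h => absurd h hdB)
  refine ⟨z ::ₘ L, ?_, by simp; omega⟩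
  rw [sumVecMulVecSelf_cons, hL, add_left_comm, ZModModule.add_self, add_zero]

end SumVecMulVecSelf

end Matrix

section SubgraphComplementation

variable {V : Type*} (G : SimpleGraph V)

theorem exists_fitsF2 : ∃ A, FitsF2 G A := by
  classical
  exact ⟨G.adjMatrix (ZMod 2), G.isSymm_adjMatrix, fun u v _ => by
    simp [SimpleGraph.adjMatrix_apply]⟩

variable [Fintype V]

theorem exists_fitsF2_rank_eq_mrF2 : ∃ A, FitsF2 G A ∧ A.rank = mrF2 G := by
  obtain ⟨A, hA⟩ := exists_fitsF2 G
  exact Nat.sInf_mem (s := {k | ∃ A : Matrix V V (ZMod 2), FitsF2 G A ∧ A.rank = k})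
    ⟨_, A, hA, rfl⟩

variable [DecidableEq V]

def vecSupport (x : V → ZMod 2) : Finset V := {v | x v = 1}

theorem map_vecSupport_surjective : Function.Surjective (Multiset.map (vecSupport (V := V))) :=
  Multiset.map_surjective_of_surjective fun C =>
    ⟨fun v => if v ∈ C then 1 else 0, by ext; simp [vecSupport]⟩

theorem isSCS_map_vecSupport_iff_fitsF2 (L : Multiset (V → ZMod 2)) :
    IsSCS G (L.map vecSupport) ↔ FitsF2 G (sumVecMulVecSelf L) := by
  simp only [IsSCS, FitsF2, vecSupport, isSymm_sumVecMulVecSelf, true_and, Multiset.filter_map,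
    Multiset.card_map, ← ZMod.natCast_eq_one_iff_odd]
  refine forall₂_congr fun u v => imp_congr_right fun _ => ?_
  rw [← natCast_card_filter_eq_sumVecMulVecSelf_apply, iff_comm (a := G.Adj u v)]
  simp [vecSupport]


theorem c2_le_card_of_fitsF2 {L : Multiset (V → ZMod 2)} (h : FitsF2 G (sumVecMulVecSelf L)) :
    c2 G ≤ Multiset.card L :=
  Nat.sInf_le (s := {k | ∃ 𝒞 : Multiset (Finset V), IsSCS G 𝒞 ∧ Multiset.card 𝒞 = k})
    ⟨_, (isSCS_map_vecSupport_iff_fitsF2 G L).2 h, Multiset.card_map _ _⟩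

theorem mrF2_le_card_of_isSCS {𝒞 : Multiset (Finset V)} (h : IsSCS G 𝒞) :
    mrF2 G ≤ Multiset.card 𝒞 := by
  obtain ⟨L, rfl⟩ := map_vecSupport_surjective 𝒞
  rw [Multiset.card_map]
  exact (Nat.sInf_le (s := {k | ∃ A : Matrix V V (ZMod 2), FitsF2 G A ∧ A.rank = k})
    ⟨_, (isSCS_map_vecSupport_iff_fitsF2 G L).1 h, rfl⟩).trans
    (rank_sumVecMulVecSelf_le L)

theorem mrF2_le_c2 : mrF2 G ≤ c2 G := by
  obtain ⟨A, hA⟩ := exists_fitsF2 G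
  obtain ⟨L, hL, -⟩ := exists_sumVecMulVecSelf_eq_card_le_rank_add_one hA.1
  obtain ⟨𝒞, h𝒞, hcard⟩ :=
    Nat.sInf_mem (s := {k | ∃ 𝒞 : Multiset (Finset V), IsSCS G 𝒞 ∧ Multiset.card 𝒞 = k})
      ⟨_, _, (isSCS_map_vecSupport_iff_fitsF2 G L).2 (hL ▸ hA), rfl⟩
  exact (mrF2_le_card_of_isSCS G h𝒞).trans_eq hcard

end SubgraphComplementation

theorem stmt8 {V : Type*} [Fintype V] [DecidableEq V] (G : SimpleGraph V) :
    c2 G = mrF2 G ∨ (c2 G = mrF2 G + 1 ∧ Even (mrF2 G)) := by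
  obtain ⟨A, hA, hrank⟩ := exists_fitsF2_rank_eq_mrF2 G
  have hlow := mrF2_le_c2 G
  by_cases hd : A.diag = 0 → A = 0
  · obtain ⟨L, hL, hcard⟩ := exists_sumVecMulVecSelf_eq_card_le_rank hA.1 hd
    have := c2_le_card_of_fitsF2 G (hL ▸ hA)
    left
    omega
  · obtain ⟨L, hL, hcard⟩ := exists_sumVecMulVecSelf_eq_card_le_rank_add_one hA.1
    have := c2_le_card_of_fitsF2 G (hL ▸ hA)
    have heven : Even (mrF2 G) := hrank ▸ even_rank_of_diag_eq_zero hA.1 (Classical.not_imp.1 hd).1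
    rcases (by omega : c2 G = mrF2 G ∨ c2 G = mrF2 G + 1) with h | h
    · exact .inl h
    · exact .inr ⟨h, heven⟩
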